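/- arXiv:1703.01768 — 2 statements merged into one kernel-verified Lean document; each statement's English description precedes it below -/
import Mathlib

section
/- Let Θ_i, Θ_j, Θ_k ∈ [0, π) with cos Θ_i + cos Θ_j cos Θ_k ≥ 0 cyclically (all three inequalities). For positive reals r_i, r_j, r_k set a_η = cosh r_η, x_η = sinh r_η, I_η = cos Θ_η. Then (cosh l_i cosh l_j - cosh l_k)² < sinh² l_i · sinh² l_j, where cosh l_i = a_j a_k + I_i x_j x_k etc. -/
/-!
Write `c_η = cosh l_η`. Since `sinh² = cosh² - 1`, the gap
`sinh² l_i sinh² l_j - (c_i c_j - c_k)²` is the Gram determinant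
`1 + 2 c_i c_j c_k - c_i² - c_j² - c_k²`. Substituting the hyperbolic law of cosines and
reducing with `cosh² r - sinh² r = 1`, this determinant becomes a sum of seven terms, each a
product of a nonnegative monomial in `cosh r_η, sinh r_η` with one of `1 - I_η²`,
`1 + I_i I_j I_k` or `I_i + I_j I_k`. All are nonnegative, and `1 + I_i I_j I_k` is strictly
positive because no `Θ_η` equals `π`.
-/

open Real

/-- The determinant of `!![1, r, q; r, 1, p; q, p, 1]`. -/
def gramDet {R : Type*} [CommRing R] (p q r : R) : R :=
  1 + 2 * p * q * r - p ^ 2 - q ^ 2 - r ^ 2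

theorem sinh_sq_mul_sinh_sq_sub_sq_eq_gramDet (x y z : ℝ) :
    sinh x ^ 2 * sinh y ^ 2 - (cosh x * cosh y - cosh z) ^ 2
      = gramDet (cosh x) (cosh y) (cosh z) := by
  rw [sinh_sq, sinh_sq, gramDet]
  ring

theorem gramDet_cosine_law {R : Type*} [CommRing R] {ai aj ak xi xj xk : R} (Ci Cj Ck : R)
    (hi : ai ^ 2 - xi ^ 2 = 1) (hj : aj ^ 2 - xj ^ 2 = 1) (hk : ak ^ 2 - xk ^ 2 = 1) :
    gramDet (aj * ak + Ci * xj * xk) (ak * ai + Cj * xk * xi) (ai * aj + Ck * xi * xj)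
      = xj ^ 2 * xk ^ 2 * (1 - Ci ^ 2) + xk ^ 2 * xi ^ 2 * (1 - Cj ^ 2)
        + xi ^ 2 * xj ^ 2 * (1 - Ck ^ 2)
        + 2 * xi ^ 2 * xj ^ 2 * xk ^ 2 * (1 + Ci * Cj * Ck)
        + 2 * aj * ak * xi ^ 2 * xj * xk * (Ci + Cj * Ck)
        + 2 * ak * ai * xj ^ 2 * xk * xi * (Cj + Ck * Ci)
        + 2 * ai * aj * xk ^ 2 * xi * xj * (Ck + Ci * Cj) := by
  rw [gramDet]
  linear_combination (2 * aj ^ 2 * ak ^ 2 + 2 * aj * ak * xj * xk * Ci - ak ^ 2 - aj ^ 2) * hi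
    + (2 * ai * ak * xi * xk * Cj + ak ^ 2 + 2 * ak ^ 2 * xi ^ 2 - 1 - xi ^ 2) * hj
    + (2 * ai * aj * xi * xj * Ck + xj ^ 2 + xi ^ 2 + 2 * xi ^ 2 * xj ^ 2) * hk

theorem mul_mem_Ioc_neg_one_one {R : Type*} [CommRing R] [LinearOrder R] [IsStrictOrderedRing R]
    {a b : R} (ha : a ∈ Set.Ioc (-1) 1) (hb : b ∈ Set.Ioc (-1) 1) :
    a * b ∈ Set.Ioc (-1) 1 := by
  obtain ⟨ha₁, ha₂⟩ := ha
  obtain ⟨hb₁, hb₂⟩ := hb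
  have hpp : 0 < (1 + a) * (1 + b) := mul_pos (by linarith) (by linarith)
  have hmm : 0 ≤ (1 - a) * (1 - b) := mul_nonneg (by linarith) (by linarith)
  have hpm : 0 ≤ (1 + a) * (1 - b) := mul_nonneg (by linarith) (by linarith)
  have hmp : 0 ≤ (1 - a) * (1 + b) := mul_nonneg (by linarith) (by linarith)
  constructor <;> linarith

theorem Real.cos_mem_Ioc_of_mem_Ico {θ : ℝ} (hθ : θ ∈ Set.Ico 0 π) :
    cos θ ∈ Set.Ioc (-1) 1 := by
  refine ⟨?_, cos_le_one θ⟩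
  simpa using cos_lt_cos_of_nonneg_of_le_pi hθ.1 le_rfl hθ.2

theorem gramDet_cosh_cosine_law_pos {Θi Θj Θk : ℝ}
    (hi : Θi ∈ Set.Ico 0 π) (hj : Θj ∈ Set.Ico 0 π) (hk : Θk ∈ Set.Ico 0 π)
    (hγi : 0 ≤ cos Θi + cos Θj * cos Θk) (hγj : 0 ≤ cos Θj + cos Θk * cos Θi)
    (hγk : 0 ≤ cos Θk + cos Θi * cos Θj) {ri rj rk : ℝ} (hri : 0 < ri) (hrj : 0 < rj)
    (hrk : 0 < rk) :
    0 < gramDet (cosh rj * cosh rk + cos Θi * sinh rj * sinh rk)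
      (cosh rk * cosh ri + cos Θj * sinh rk * sinh ri)
      (cosh ri * cosh rj + cos Θk * sinh ri * sinh rj) := by
  rw [gramDet_cosine_law _ _ _ (cosh_sq_sub_sinh_sq ri) (cosh_sq_sub_sinh_sq rj)
    (cosh_sq_sub_sinh_sq rk)]
  have hprod : 0 < 1 + cos Θi * cos Θj * cos Θk := neg_lt_iff_pos_add'.1
    (mul_mem_Ioc_neg_one_one (mul_mem_Ioc_neg_one_one (cos_mem_Ioc_of_mem_Ico hi)
      (cos_mem_Ioc_of_mem_Ico hj)) (cos_mem_Ioc_of_mem_Ico hk)).1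
  rw [← sin_sq, ← sin_sq, ← sin_sq]
  -- `positivity` consults hypotheses only for atoms
  generalize 1 + cos Θi * cos Θj * cos Θk = p at hprod ⊢
  generalize cos Θi + cos Θj * cos Θk = γi at hγi ⊢
  generalize cos Θj + cos Θk * cos Θi = γj at hγj ⊢
  generalize cos Θk + cos Θi * cos Θj = γk at hγk ⊢
  positivity

theorem cosh_triangle_ineq_squared
    (Θi Θj Θk : ℝ)
    (hi : Θi ∈ Set.Ico 0 π) (hj : Θj ∈ Set.Ico 0 π) (hk : Θk ∈ Set.Ico 0 π)
    (hγi : 0 ≤ Real.cos Θi + Real.cos Θj * Real.cos Θk)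
    (hγj : 0 ≤ Real.cos Θj + Real.cos Θk * Real.cos Θi)
    (hγk : 0 ≤ Real.cos Θk + Real.cos Θi * Real.cos Θj)
    (ri rj rk : ℝ) (hri : 0 < ri) (hrj : 0 < rj) (hrk : 0 < rk)
    (li lj lk : ℝ)
    (hcoshi : Real.cosh li = Real.cosh rj * Real.cosh rk + Real.cos Θi * Real.sinh rj * Real.sinh rk)
    (hcoshj : Real.cosh lj = Real.cosh rk * Real.cosh ri + Real.cos Θj * Real.sinh rk * Real.sinh ri)
    (hcoshk : Real.cosh lk = Real.cosh ri * Real.cosh rj + Real.cos Θk * Real.sinh ri * Real.sinh rj) :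
    (Real.cosh li * Real.cosh lj - Real.cosh lk) ^ 2
      < Real.sinh li ^ 2 * Real.sinh lj ^ 2 := by
  rw [← sub_pos, sinh_sq_mul_sinh_sq_sub_sq_eq_gramDet, hcoshi, hcoshj, hcoshk]
  exact gramDet_cosh_cosine_law_pos hi hj hk hγi hγj hγk hri hrj hrk
end

section
/- In the setting of the three-circle configuration, the inner angle ϑ_i at the center of the disk of radius r_i satisfies ϑ_i → 0 as r_i → ∞, uniformly in r_j, r_k > 0 and uniformly for (Θ_i, Θ_j, Θ_k) in any compact subset K of [0,π)³ on which the configuration conditions hold. -/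
open Real

/-- Inverse hyperbolic cosine (for `x ≥ 1`). -/
noncomputable def arcosh (x : ℝ) : ℝ := Real.log (x + Real.sqrt (x ^ 2 - 1))

/-- Side length `l_i` of the triangle of centers, as a function of the radii and
the exterior intersection angle `Θi`. -/
noncomputable def sideLength (Θi rj rk : ℝ) : ℝ :=
  _root_.arcosh (Real.cosh rj * Real.cosh rk + Real.cos Θi * Real.sinh rj * Real.sinh rk)

/-- Inner angle `ϑ_i` at the center of the disk of radius `ri`. -/
noncomputable def innerAngle (Θi Θj Θk ri rj rk : ℝ) : ℝ :=
  let li := sideLength Θi rj rk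
  let lj := sideLength Θj rk ri
  let lk := sideLength Θk ri rj
  Real.arccos ((Real.cosh lj * Real.cosh lk - Real.cosh li) / (Real.sinh lj * Real.sinh lk))

open Filter Topology Set

/-!
Write `C_r = cosh r`. By the hyperbolic law of cosines, `cosh l_i ≤ 2 C_j C_k`, while
`cosh l_j ≥ η C_k C_i` and `cosh l_k ≥ η C_i C_j` once the cosines of `Θ_j, Θ_k` are
bounded below by `η - 1 > -1`, which compactness of `K ⊆ [0, π)³` provides. Hence
`cosh l_i ≤ δ cosh l_j cosh l_k` with `δ = 2 / (η C_i)²`, and this forces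
`cos ϑ_i ≥ 1 - δ → 1`.
-/

theorem Real.tendsto_cosh_atTop : Tendsto cosh atTop atTop := by
  refine tendsto_atTop_mono (fun x => ?_) (tendsto_exp_atTop.atTop_div_const two_pos)
  rw [cosh_eq]
  linarith [exp_pos (-x)]

theorem Real.neg_one_lt_cos_of_mem_Ico {θ : ℝ} (h : θ ∈ Ico 0 π) : -1 < cos θ := by
  simpa using cos_lt_cos_of_nonneg_of_le_pi h.1 le_rfl h.2

section HyperbolicLawOfCosines

variable {c η x y : ℝ}

theorem sinh_mul_sinh_le_cosh_mul_cosh (x : ℝ) (hy : 0 ≤ y) :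
    sinh x * sinh y ≤ cosh x * cosh y :=
  mul_le_mul (sinh_lt_cosh x).le (sinh_lt_cosh y).le (sinh_nonneg_iff.2 hy) (cosh_pos x).le

theorem cosh_mul_cosh_add_mul_sinh_mul_sinh (c x y : ℝ) :
    cosh x * cosh y + c * sinh x * sinh y = cosh (x - y) + (1 + c) * (sinh x * sinh y) := by
  rw [cosh_sub]
  ring

theorem one_le_cosh_mul_cosh_add (hc : -1 ≤ c) (hx : 0 ≤ x) (hy : 0 ≤ y) :
    1 ≤ cosh x * cosh y + c * sinh x * sinh y := by
  rw [cosh_mul_cosh_add_mul_sinh_mul_sinh]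
  have : 0 ≤ (1 + c) * (sinh x * sinh y) :=
    mul_nonneg (by linarith) (mul_nonneg (sinh_nonneg_iff.2 hx) (sinh_nonneg_iff.2 hy))
  linarith [one_le_cosh (x - y)]

theorem one_lt_cosh_mul_cosh_add (hc : -1 < c) (hx : 0 < x) (hy : 0 < y) :
    1 < cosh x * cosh y + c * sinh x * sinh y := by
  rw [cosh_mul_cosh_add_mul_sinh_mul_sinh]
  have : 0 < (1 + c) * (sinh x * sinh y) :=
    mul_pos (by linarith) (mul_pos (sinh_pos_iff.2 hx) (sinh_pos_iff.2 hy))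
  linarith [one_le_cosh (x - y)]

theorem mul_cosh_mul_cosh_le (hη : η ≤ 1) (hc : η - 1 ≤ c) (hx : 0 ≤ x) (hy : 0 ≤ y) :
    η * (cosh x * cosh y) ≤ cosh x * cosh y + c * sinh x * sinh y := by
  have hsplit : cosh x * cosh y + c * sinh x * sinh y =
      η * (cosh x * cosh y) + (1 - η) * cosh (x - y) + (c - (η - 1)) * (sinh x * sinh y) := by
    rw [cosh_sub]
    ring
  have h₁ : 0 ≤ (1 - η) * cosh (x - y) := mul_nonneg (by linarith) (cosh_pos _).le
  have h₂ : 0 ≤ (c - (η - 1)) * (sinh x * sinh y) :=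
    mul_nonneg (by linarith) (mul_nonneg (sinh_nonneg_iff.2 hx) (sinh_nonneg_iff.2 hy))
  linarith

theorem cosh_mul_cosh_add_le (hc : c ≤ 1) (hx : 0 ≤ x) (hy : 0 ≤ y) :
    cosh x * cosh y + c * sinh x * sinh y ≤ 2 * (cosh x * cosh y) := by
  have hS : 0 ≤ sinh x * sinh y := mul_nonneg (sinh_nonneg_iff.2 hx) (sinh_nonneg_iff.2 hy)
  nlinarith [sinh_mul_sinh_le_cosh_mul_cosh x hy]

theorem one_sub_le_div_sinh_mul_sinh {a b c δ : ℝ} (hb : 0 < b) (hc : 0 < c) (hδ : δ ≤ 1)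
    (ha : cosh a ≤ δ * (cosh b * cosh c)) :
    1 - δ ≤ (cosh b * cosh c - cosh a) / (sinh b * sinh c) := by
  have hS : 0 < sinh b * sinh c := mul_pos (sinh_pos_iff.2 hb) (sinh_pos_iff.2 hc)
  rw [le_div_iff₀ hS]
  calc (1 - δ) * (sinh b * sinh c) ≤ (1 - δ) * (cosh b * cosh c) :=
        mul_le_mul_of_nonneg_left (sinh_mul_sinh_le_cosh_mul_cosh b hc.le) (by linarith)
    _ ≤ cosh b * cosh c - cosh a := by linarith

end HyperbolicLawOfCosines

section Configuration

variable {η Θ Θi Θj Θk ri rj rk y z : ℝ}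

theorem cosh_sideLength (hy : 0 ≤ y) (hz : 0 ≤ z) :
    cosh (sideLength Θ y z) = cosh y * cosh z + cos Θ * sinh y * sinh z :=
  Real.cosh_arcosh (one_le_cosh_mul_cosh_add (neg_one_le_cos Θ) hy hz)

theorem sideLength_pos (hΘ : -1 < cos Θ) (hy : 0 < y) (hz : 0 < z) : 0 < sideLength Θ y z :=
  Real.arcosh_pos (one_lt_cosh_mul_cosh_add hΘ hy hz)

theorem cosh_sideLength_le_mul_cosh_sideLength_mul (hη : 0 < η) (hη₁ : η ≤ 1)
    (hj : η - 1 ≤ cos Θj) (hk : η - 1 ≤ cos Θk) (hri : 0 ≤ ri) (hrj : 0 ≤ rj) (hrk : 0 ≤ rk) :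
    cosh (sideLength Θi rj rk) ≤
      2 / (η * cosh ri) ^ 2 * (cosh (sideLength Θj rk ri) * cosh (sideLength Θk ri rj)) := by
  rw [cosh_sideLength hrj hrk, cosh_sideLength hrk hri, cosh_sideLength hri hrj]
  calc _ ≤ 2 * (cosh rj * cosh rk) := cosh_mul_cosh_add_le (cos_le_one Θi) hrj hrk
    _ = 2 / (η * cosh ri) ^ 2 * (η * (cosh rk * cosh ri) * (η * (cosh ri * cosh rj))) := by
      field_simp
    _ ≤ _ := by
      have hj' := mul_cosh_mul_cosh_le hη₁ hj hrk hri
      have hk' := mul_cosh_mul_cosh_le hη₁ hk hri hrj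
      gcongr
      exact hj'.trans' (by positivity)

theorem innerAngle_le_arccos (hη : 0 < η) (hη₁ : η ≤ 1)
    (hj : η - 1 ≤ cos Θj) (hk : η - 1 ≤ cos Θk) (hri : 0 < ri) (hrj : 0 < rj) (hrk : 0 < rk)
    (hδ : 2 / (η * cosh ri) ^ 2 ≤ 1) :
    innerAngle Θi Θj Θk ri rj rk ≤ arccos (1 - 2 / (η * cosh ri) ^ 2) :=
  antitone_arccos <| one_sub_le_div_sinh_mul_sinh
    (sideLength_pos (by linarith) hrk hri) (sideLength_pos (by linarith) hri hrj) hδ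
    (cosh_sideLength_le_mul_cosh_sideLength_mul hη hη₁ hj hk hri.le hrj.le hrk.le)

end Configuration

theorem exists_forall_sub_one_le_cos {K : Set (ℝ × ℝ × ℝ)} (hK : IsCompact K)
    (hKsub : ∀ Θ ∈ K, Θ.2.1 ∈ Ico 0 π ∧ Θ.2.2 ∈ Ico 0 π) :
    ∃ η, 0 < η ∧ η ≤ 1 ∧ ∀ Θ ∈ K, η - 1 ≤ cos Θ.2.1 ∧ η - 1 ≤ cos Θ.2.2 := by
  obtain ⟨a, ha, hKa⟩ := hK.exists_forall_le' (f := fun Θ => min (cos Θ.2.1) (cos Θ.2.2))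
    (by fun_prop) fun Θ hΘ => lt_min (neg_one_lt_cos_of_mem_Ico (hKsub Θ hΘ).1)
      (neg_one_lt_cos_of_mem_Ico (hKsub Θ hΘ).2)
  refine ⟨min (a + 1) 1, lt_min (by linarith) one_pos, min_le_right _ _, fun Θ hΘ => ?_⟩
  have hη := min_le_left (a + 1) 1
  have hΘa := le_min_iff.1 (hKa Θ hΘ)
  constructor <;> linarith [hΘa.1, hΘa.2]

theorem innerAngle_tendsto_zero_uniformly
    (K : Set (ℝ × ℝ × ℝ)) (hK : IsCompact K)
    (hKsub : K ⊆ {Θ : ℝ × ℝ × ℝ |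
      Θ.1 ∈ Set.Ico 0 π ∧ Θ.2.1 ∈ Set.Ico 0 π ∧ Θ.2.2 ∈ Set.Ico 0 π ∧
      ((Θ.1 + Θ.2.1 + Θ.2.2 ≤ π) ∨
        (Θ.1 + Θ.2.1 < π + Θ.2.2 ∧ Θ.2.1 + Θ.2.2 < π + Θ.1 ∧ Θ.2.2 + Θ.1 < π + Θ.2.1))}) :
    ∀ ε > 0, ∃ R : ℝ, ∀ ri rj rk Θi Θj Θk : ℝ,
      R < ri → 0 < rj → 0 < rk → (Θi, Θj, Θk) ∈ K →
      innerAngle Θi Θj Θk ri rj rk < ε := by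
  intro ε hε
  obtain ⟨η, hη, hη₁, hηK⟩ := exists_forall_sub_one_le_cos hK fun Θ hΘ =>
    ⟨(hKsub hΘ).2.1, (hKsub hΘ).2.2.1⟩
  have hδ : Tendsto (fun r => 2 / (η * cosh r) ^ 2) atTop (𝓝 0) :=
    tendsto_const_nhds.div_atTop <|
      (tendsto_pow_atTop two_ne_zero).comp (tendsto_cosh_atTop.const_mul_atTop hη)
  have hlim : Tendsto (fun r => arccos (1 - 2 / (η * cosh r) ^ 2)) atTop (𝓝 0) := by
    simpa [Function.comp_def] using
      (continuous_arccos.tendsto (1 - 0)).comp (tendsto_const_nhds.sub hδ)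
  obtain ⟨R, hR⟩ := eventually_atTop.1 <| (hlim.eventually (gt_mem_nhds hε)).and <|
    (hδ.eventually (ge_mem_nhds one_pos)).and (eventually_gt_atTop 0)
  refine ⟨R, fun ri rj rk Θi Θj Θk hri hrj hrk hΘ => ?_⟩
  obtain ⟨hlt, hδ₁, hri₀⟩ := hR ri hri.le
  exact (innerAngle_le_arccos hη hη₁ (hηK _ hΘ).1 (hηK _ hΘ).2 hri₀ hrj hrk hδ₁).trans_lt hlt
end
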